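/- Let q be a prime power and 1 ≤ k ≤ n. Suppose {A^i_1 × ⋯ × A^i_k}_{i=1}^N is a partition of (F_qP^n)^k into product sets such that for every i there is a (k−1)-flat L^i ⊆ F_qP^n with A^i_1 × ⋯ × A^i_k ⊆ (L^i)^k. Then N ≥ ((q^{n+1} − 1)/(q^k − 1))^k. -/

import Mathlib

/-!
A volume argument. A `(k-1)`-flat is the projectivization of a `k`-dimensional space, so it has
`[k]_q = 1 + q + ⋯ + q^(k-1) = (q^k - 1)/(q - 1)` points, and a box inside the `k`-th power of
such a flat has at most `[k]_q^k` points. Covering `(F_qPⁿ)ᵏ`, which has `[n+1]_q^k` points,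
therefore takes at least `([n+1]_q / [k]_q)^k` boxes.
-/

open Projectivization Set
open scoped LinearAlgebra.Projectivization

/-- A `d`-flat in a projective space over a field: the set of projective points whose
representing line lies in a `(d+1)`-dimensional linear subspace. -/
def IsFlat {K V : Type*} [Field K] [AddCommGroup V] [Module K V]
    (d : ℕ) (A : Set (Projectivization K V)) : Prop :=
  ∃ W : Submodule K V, Module.finrank K ↥W = d + 1 ∧
    A = {x : Projectivization K V | x.submodule ≤ W}

lemma Set.ncard_univ_pi_le_pow {ι α : Type*} [Fintype ι] {s : ι → Set α} {t : Set α}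
    (ht : t.Finite) (hst : ∀ i, s i ⊆ t) :
    (univ.pi s).ncard ≤ t.ncard ^ Fintype.card ι := by
  have : Finite t := ht
  calc (univ.pi s).ncard ≤ (univ.pi fun _ : ι => t).ncard :=
        ncard_le_ncard (pi_mono fun i _ => hst i) (Finite.of_equiv _ (Equiv.Set.univPi _).symm)
    _ = t.ncard ^ Fintype.card ι := by
        rw [← Nat.card_coe_set_eq, Nat.card_congr (Equiv.Set.univPi _), Nat.card_fun,
          Nat.card_eq_fintype_card (α := ι), Nat.card_coe_set_eq]

lemma natCard_pow_le_of_iUnion_pi_eq_univ {ι α : Type*} [Fintype ι] [Finite α] {N m : ℕ}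
    (A : Fin N → ι → Set α) (hcover : ⋃ i, univ.pi (A i) = univ)
    (hA : ∀ i, ∃ t : Set α, t.ncard ≤ m ∧ ∀ j, A i j ⊆ t) :
    Nat.card α ^ Fintype.card ι ≤ N * m ^ Fintype.card ι := by
  have hbox : ∀ i, (univ.pi (A i)).ncard ≤ m ^ Fintype.card ι := fun i => by
    obtain ⟨t, htm, hAt⟩ := hA i
    exact (ncard_univ_pi_le_pow t.toFinite hAt).trans (Nat.pow_le_pow_left htm _)
  calc Nat.card α ^ Fintype.card ι = (univ : Set (ι → α)).ncard := by
        rw [ncard_univ, Nat.card_fun, Nat.card_eq_fintype_card (α := ι)]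
    _ ≤ ∑ i, (univ.pi (A i)).ncard := hcover ▸ ncard_iUnion_le_of_fintype _
    _ ≤ ∑ _i : Fin N, m ^ Fintype.card ι := Finset.sum_le_sum fun i _ => hbox i
    _ = N * m ^ Fintype.card ι := by simp

namespace Projectivization

variable {K V : Type*} [Field K] [AddCommGroup V] [Module K V]

lemma range_map_subtype (W : Submodule K V) :
    range (map W.subtype W.injective_subtype) = {x : ℙ K V | x.submodule ≤ W} := by
  ext x
  induction x using Projectivization.ind with
  | h v hv =>
    simp only [mem_ofPred_eq, submodule_mk, Submodule.span_singleton_le_iff_mem, mem_range]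
    constructor
    · rintro ⟨y, hy⟩
      induction y using Projectivization.ind with
      | h w hw =>
        rw [map_mk, mk_eq_mk_iff] at hy
        obtain ⟨a, ha⟩ := hy
        exact (W.smul_mem_iff' a).1 (ha ▸ w.2)
    · intro hvW
      exact ⟨mk K ⟨v, hvW⟩ fun h => hv (congrArg Subtype.val h), rfl⟩

lemma natCard_setOf_submodule_le (W : Submodule K V) :
    Nat.card {x : ℙ K V | x.submodule ≤ W} = Nat.card (ℙ K W) := by
  rw [← range_map_subtype, Nat.card_range_of_injective (map_injective _ _)]

end Projectivization

lemma IsFlat.ncard_eq {K V : Type*} [Field K] [Finite K] [AddCommGroup V] [Module K V]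
    {d : ℕ} {L : Set (ℙ K V)} (hL : IsFlat d L) :
    L.ncard = ∑ i ∈ Finset.range (d + 1), Nat.card K ^ i := by
  obtain ⟨W, hW, rfl⟩ := hL
  rw [← Nat.card_coe_set_eq, natCard_setOf_submodule_le, card_of_finrank K W hW]

lemma Nat.cast_geom_sum_eq_div {x : ℕ} (hx : x ≠ 1) (m : ℕ) :
    ((∑ i ∈ Finset.range m, x ^ i : ℕ) : ℝ) = ((x : ℝ) ^ m - 1) / (x - 1) := by
  push_cast
  exact geom_sum_eq (by exact_mod_cast hx) m

theorem dpp_volume_lower_bound_general (q n k N : ℕ) (hk : 1 ≤ k)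
    (K : Type) [Field K] [Fintype K] (hq : Fintype.card K = q)
    (A : Fin N → Fin k → Set (Projectivization K (Fin (n + 1) → K)))
    (hcover : (⋃ i, Set.univ.pi (A i)) = Set.univ)
    (hflat : ∀ i, ∃ L : Set (Projectivization K (Fin (n + 1) → K)),
      IsFlat (k - 1) L ∧ ∀ j, A i j ⊆ L) :
    (((q : ℝ) ^ (n + 1) - 1) / ((q : ℝ) ^ k - 1)) ^ k ≤ (N : ℝ) := by
  rw [Fintype.card_eq_nat_card] at hq
  subst hq
  have hq_one : 1 < Nat.card K := Finite.one_lt_card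
  have hbound := natCard_pow_le_of_iUnion_pi_eq_univ A hcover fun i => by
    obtain ⟨L, hL, hAL⟩ := hflat i
    exact ⟨L, (hL.ncard_eq.trans (by rw [Nat.sub_add_cancel hk])).le, hAL⟩
  rw [Fintype.card_fin, card_of_finrank K _ (Module.finrank_fin_fun K)] at hbound
  have hreal := (Nat.cast_le (α := ℝ)).2 hbound
  rw [Nat.cast_mul, Nat.cast_pow, Nat.cast_pow, Nat.cast_geom_sum_eq_div hq_one.ne',
    Nat.cast_geom_sum_eq_div hq_one.ne'] at hreal
  have hq_real : (1 : ℝ) < Nat.card K := by exact_mod_cast hq_one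
  have hden : 0 < ((Nat.card K : ℝ) ^ k - 1) / (Nat.card K - 1) :=
    div_pos (by linarith [one_lt_pow₀ hq_real (by omega : k ≠ 0)]) (by linarith)
  rw [← div_div_div_cancel_right₀ (by linarith : (Nat.card K : ℝ) - 1 ≠ 0), div_pow,
    div_le_iff₀ (pow_pos hden k)]
  exact hreal

/-- volume lower bound: any partition of `(F_qPⁿ)ᵏ` (for `1 ≤ k ≤ n`)
into product sets, each contained in the `k`-th power of a `(k-1)`-flat, has at least
`((q^{n+1} - 1)/(q^k - 1))^k` parts. -/
theorem dpp_volume_lower_bound (q n k N : ℕ) (hk : 1 ≤ k) (hkn : k ≤ n)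
    (K : Type) [Field K] [Fintype K] (hq : Fintype.card K = q)
    (A : Fin N → Fin k → Set (Projectivization K (Fin (n + 1) → K)))
    (hne : ∀ i, (Set.univ.pi (A i)).Nonempty)
    (hdisj : ∀ i j, i ≠ j → Disjoint (Set.univ.pi (A i)) (Set.univ.pi (A j)))
    (hcover : (⋃ i, Set.univ.pi (A i)) = Set.univ)
    (hflat : ∀ i, ∃ L : Set (Projectivization K (Fin (n + 1) → K)),
      IsFlat (k - 1) L ∧ ∀ j, A i j ⊆ L) :
    (((q : ℝ) ^ (n + 1) - 1) / ((q : ℝ) ^ k - 1)) ^ k ≤ (N : ℝ) :=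
  dpp_volume_lower_bound_general q n k N hk K hq A hcover hflat
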